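/- arXiv:1202.3945 — 2 statements merged into one kernel-verified Lean document; each statement's English description precedes it below -/
import Mathlib

section
/- For every real θ, the endomorphism Sp_{3,1}(R_I(θ)) − e^{iπ/4}·Id_{V^{⊗2}} of V^{⊗2}, V = ℂ², acts off-diagonally on the second (last) tensor factor: its matrix entry at ((j_1,j_2),(i_1,i_2)) vanishes whenever i_2 = j_2. Similarly, Sp_{3,1}(R_I(θ)^{−1}) − e^{−iπ/4}·Id_{V^{⊗2}} has vanishing entries at all ((j_1,j_2),(i_1,i_2)) with i_2 = j_2. -/
open scoped BigOperators
open Matrix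

/-- Endomorphisms of `V^{⊗n}`, `dim V = d`, as multi-indexed matrices. -/
abbrev MIM (d n : ℕ) := Matrix (Fin n → Fin d) (Fin n → Fin d) ℂ

/-- Kronecker (tensor) product of multi-indexed matrices. -/
noncomputable def mtens {d a b : ℕ} (f : MIM d a) (g : MIM d b) : MIM d (a + b) :=
  fun i j =>
    f (fun x => i (Fin.castAdd b x)) (fun x => j (Fin.castAdd b x)) *
    g (fun x => i (Fin.natAdd a x)) (fun x => j (Fin.natAdd a x))

/-- Partial operator trace `Sp_{p+m,m}` over the last `m` tensor factors. -/
noncomputable def pTr {d : ℕ} (p m : ℕ) (f : MIM d (p + m)) : MIM d p :=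
  fun i j => ∑ l : Fin m → Fin d, f (Fin.append i l) (Fin.append j l)

/-- Kronecker power `μ^{⊗ n}`. -/
noncomputable def mpow {d : ℕ} (μ : Matrix (Fin d) (Fin d) ℂ) (n : ℕ) : MIM d n :=
  fun i j => ∏ x : Fin n, μ (i x) (j x)

/-- Transport a multi-indexed matrix along an equality of the number of factors. -/
noncomputable def recast {d a b : ℕ} (h : a = b) (f : MIM d a) : MIM d b :=
  Matrix.reindex (Equiv.arrowCongr (finCongr h) (Equiv.refl (Fin d)))
    (Equiv.arrowCongr (finCongr h) (Equiv.refl (Fin d))) f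

/-- `R_i = I_m^{⊗(i-1)} ⊗ R ⊗ I_m^{⊗(n-i-1)}` acting on `V^{⊗(k+m(n-2))}`
(zero-based index `i : Fin (n-1)`). -/
noncomputable def Rop (d k m n : ℕ) (R : MIM d k) (i : Fin (n - 1)) : MIM d (k + m * (n - 2)) :=
  fun a b =>
    if ∀ x : Fin (k + m * (n - 2)),
        ((x : ℕ) < m * (i : ℕ) ∨ m * (i : ℕ) + k ≤ (x : ℕ)) → a x = b x then
      R (fun y => a ⟨m * (i : ℕ) + (y : ℕ), by
            have h1 : (i : ℕ) < n - 1 := i.isLt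
            have h2 : m * (i : ℕ) ≤ m * (n - 2) := Nat.mul_le_mul_left m (by omega)
            have h3 := y.isLt
            omega⟩)
        (fun y => b ⟨m * (i : ℕ) + (y : ℕ), by
            have h1 : (i : ℕ) < n - 1 := i.isLt
            have h2 : m * (i : ℕ) ≤ m * (n - 2) := Nat.mul_le_mul_left m (by omega)
            have h3 := y.isLt
            omega⟩)
    else 0

/-- `R` is a generalized Yang–Baxter operator of type `(d,k,m)`. -/
def IsGYB (d k m : ℕ) (R : MIM d k) : Prop :=
  IsUnit R ∧
  (Rop d k m 3 R 0 * Rop d k m 3 R 1 * Rop d k m 3 R 0 =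
      Rop d k m 3 R 1 * Rop d k m 3 R 0 * Rop d k m 3 R 1) ∧
  ∀ j : ℕ, (hj : 4 ≤ j) →
    Rop d k m j R ⟨0, by omega⟩ * Rop d k m j R ⟨j - 2, by omega⟩ =
      Rop d k m j R ⟨j - 2, by omega⟩ * Rop d k m j R ⟨0, by omega⟩

/-- Defining relations of the braid group `B_n` (zero-based generators). -/
def braidRels (n : ℕ) : Set (FreeGroup (Fin (n - 1))) :=
  { r | (∃ i j : Fin (n - 1), (i : ℕ) + 2 ≤ (j : ℕ) ∧
          r = FreeGroup.of i * FreeGroup.of j * (FreeGroup.of i)⁻¹ * (FreeGroup.of j)⁻¹) ∨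
        (∃ i j : Fin (n - 1), (j : ℕ) = (i : ℕ) + 1 ∧
          r = FreeGroup.of i * FreeGroup.of j * FreeGroup.of i *
              (FreeGroup.of j * FreeGroup.of i * FreeGroup.of j)⁻¹) }

/-- The braid group `B_n` as a presented group. -/
abbrev BraidGroup (n : ℕ) := PresentedGroup (braidRels n)

/-- Lexicographic identification of `(Fin 3 → Fin 2)` with `Fin 8`. -/
def emb (v : Fin 3 → Fin 2) : Fin 8 :=
  ⟨4 * (v 0 : ℕ) + 2 * (v 1 : ℕ) + (v 2 : ℕ), by
    have := (v 0).isLt; have := (v 1).isLt; have := (v 2).isLt; omega⟩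

/-- View an `8×8` matrix as an endomorphism of `(ℂ²)^{⊗3}` via the
lexicographically ordered basis. -/
def ofMat8 (M : Matrix (Fin 8) (Fin 8) ℂ) : MIM 2 3 :=
  fun a b => M (emb a) (emb b)

/-- The `(2,3,1)` operator of type I. -/
noncomputable def RI (θ : ℝ) : MIM 2 3 :=
  ofMat8 <| ((Real.sqrt 2 : ℂ))⁻¹ •
    (Matrix.reindex finSumFinEquiv finSumFinEquiv <| Matrix.fromBlocks
      !![1, 0, 1, 0;
         0, Complex.I, 0, Complex.exp (θ * Complex.I);
         -Complex.I, 0, Complex.I, 0;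
         0, -Complex.I * Complex.exp (-θ * Complex.I), 0, 1] 0 0
      !![Complex.I, 0, Complex.exp (θ * Complex.I), 0;
         0, 1, 0, -Complex.exp (2 * θ * Complex.I);
         -Complex.I * Complex.exp (-θ * Complex.I), 0, 1, 0;
         0, Complex.I * Complex.exp (-2 * θ * Complex.I), 0, Complex.I])

/-- The `(2,3,1)` operator of type II. -/
noncomputable def RII (θ : ℝ) : MIM 2 3 :=
  ofMat8 <| ((Real.sqrt 2 : ℂ))⁻¹ •
    (Matrix.reindex finSumFinEquiv finSumFinEquiv <| Matrix.fromBlocks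
      !![1, 0, 1, 0;
         0, Complex.I, 0, Complex.exp (θ * Complex.I);
         -1, 0, 1, 0;
         0, Complex.exp (-θ * Complex.I), 0, Complex.I] 0 0
      !![Complex.I, 0, Complex.exp (θ * Complex.I), 0;
         0, 1, 0, -Complex.exp (2 * θ * Complex.I);
         Complex.exp (-θ * Complex.I), 0, Complex.I, 0;
         0, Complex.exp (-2 * θ * Complex.I), 0, 1])

/-- The `(2,3,1)` operator of type III. -/
noncomputable def RIII (θ : ℝ) : MIM 2 3 :=
  ofMat8 <| ((Real.sqrt 2 : ℂ))⁻¹ •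
    (Matrix.reindex finSumFinEquiv finSumFinEquiv <| Matrix.fromBlocks
      !![1, 0, 1, 0;
         0, 1, 0, Complex.exp (θ * Complex.I);
         -1, 0, 1, 0;
         0, -Complex.exp (-θ * Complex.I), 0, 1] 0 0
      !![1, 0, -Complex.exp (θ * Complex.I), 0;
         0, 1, 0, -Complex.exp (2 * θ * Complex.I);
         Complex.exp (-θ * Complex.I), 0, 1, 0;
         0, Complex.exp (-2 * θ * Complex.I), 0, 1])

/-- The `4×4` antidiagonal matrix `J`. -/
def Jmat : Matrix (Fin 4) (Fin 4) ℂ :=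
  !![0, 0, 0, 1;
     0, 0, 1, 0;
     0, 1, 0, 0;
     1, 0, 0, 0]

/-- The `(2,3,2)` operator of Rowell–Zhang–Wu–Ge. -/
noncomputable def R232 : MIM 2 3 :=
  ofMat8 <| ((Real.sqrt 2 : ℂ))⁻¹ •
    (Matrix.reindex finSumFinEquiv finSumFinEquiv <|
      Matrix.fromBlocks 1 Jmat (-Jmat) 1)

section Helpers

noncomputable def AI (θ : ℝ) : Matrix (Fin 4) (Fin 4) ℂ :=
  !![1, 0, 1, 0;
     0, Complex.I, 0, Complex.exp (θ * Complex.I);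
     -Complex.I, 0, Complex.I, 0;
     0, -Complex.I * Complex.exp (-θ * Complex.I), 0, 1]

noncomputable def AI' (θ : ℝ) : Matrix (Fin 4) (Fin 4) ℂ :=
  !![1, 0, Complex.I, 0;
     0, -Complex.I, 0, Complex.I * Complex.exp (θ * Complex.I);
     1, 0, -Complex.I, 0;
     0, Complex.exp (-θ * Complex.I), 0, 1]

noncomputable def DI (θ : ℝ) : Matrix (Fin 4) (Fin 4) ℂ :=
  !![Complex.I, 0, Complex.exp (θ * Complex.I), 0;
     0, 1, 0, -Complex.exp (2 * θ * Complex.I);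
     -Complex.I * Complex.exp (-θ * Complex.I), 0, 1, 0;
     0, Complex.I * Complex.exp (-2 * θ * Complex.I), 0, Complex.I]

noncomputable def DI' (θ : ℝ) : Matrix (Fin 4) (Fin 4) ℂ :=
  !![-Complex.I, 0, Complex.I * Complex.exp (θ * Complex.I), 0;
     0, 1, 0, -Complex.I * Complex.exp (2 * θ * Complex.I);
     Complex.exp (-θ * Complex.I), 0, 1, 0;
     0, -Complex.exp (-2 * θ * Complex.I), 0, -Complex.I]

lemma mulA (θ : ℝ) : AI θ * AI' θ = (2:ℂ) • 1 := by
  ext i j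
  fin_cases i <;> fin_cases j <;>
    simp [AI, AI', Matrix.mul_apply, Fin.sum_univ_four, Matrix.one_apply,
      neg_mul, Complex.exp_neg] <;>
    (try field_simp) <;> (try ring_nf) <;> (try simp [Complex.I_sq]) <;> (try ring_nf)

lemma mulD (θ : ℝ) : DI θ * DI' θ = (2:ℂ) • 1 := by
  ext i j
  fin_cases i <;> fin_cases j <;>
    simp [DI, DI', Matrix.mul_apply, Fin.sum_univ_four, Matrix.one_apply,
      neg_mul, Complex.exp_neg] <;>
    (try field_simp) <;> (try ring_nf) <;> (try simp [Complex.I_sq]) <;> (try ring_nf)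

noncomputable def M8 (θ : ℝ) : Matrix (Fin 8) (Fin 8) ℂ :=
  ((Real.sqrt 2 : ℂ))⁻¹ •
    (Matrix.reindex finSumFinEquiv finSumFinEquiv <| Matrix.fromBlocks (AI θ) 0 0 (DI θ))

noncomputable def N8 (θ : ℝ) : Matrix (Fin 8) (Fin 8) ℂ :=
  ((Real.sqrt 2 : ℂ))⁻¹ •
    (Matrix.reindex finSumFinEquiv finSumFinEquiv <| Matrix.fromBlocks (AI' θ) 0 0 (DI' θ))

lemma RI_eq (θ : ℝ) : RI θ = ofMat8 (M8 θ) := rfl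

noncomputable def RIinv (θ : ℝ) : MIM 2 3 := ofMat8 (N8 θ)

lemma sqrt2C : ((Real.sqrt 2 : ℝ) : ℂ) * ((Real.sqrt 2 : ℝ) : ℂ) = 2 := by
  norm_cast
  exact Real.mul_self_sqrt (by norm_num)

lemma key8 (θ : ℝ) : M8 θ * N8 θ = 1 := by
  rw [M8, N8, smul_mul_assoc, mul_smul_comm, Matrix.reindex_apply, Matrix.reindex_apply,
    Matrix.submatrix_mul_equiv _ _ _ finSumFinEquiv.symm _, Matrix.fromBlocks_multiply]
  simp only [Matrix.mul_zero, Matrix.zero_mul, add_zero, zero_add, mulA, mulD]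
  have hfb : Matrix.fromBlocks ((2:ℂ) • (1 : Matrix (Fin 4) (Fin 4) ℂ)) 0 0
      ((2:ℂ) • (1 : Matrix (Fin 4) (Fin 4) ℂ)) =
      (2:ℂ) • (1 : Matrix (Fin 4 ⊕ Fin 4) (Fin 4 ⊕ Fin 4) ℂ) := by
    rw [← Matrix.fromBlocks_one, Matrix.fromBlocks_smul, smul_zero]
  rw [hfb]
  simp only [Matrix.submatrix_smul, Pi.smul_apply, Matrix.submatrix_one_equiv, smul_smul]
  have hs : ((Real.sqrt 2 : ℝ) : ℂ) ≠ 0 :=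
    Complex.ofReal_ne_zero.mpr (by positivity)
  have hval : ((Real.sqrt 2 : ℝ):ℂ)⁻¹ * (((Real.sqrt 2 : ℝ):ℂ)⁻¹ * 2) = 1 := by
    field_simp
    rw [sq]; exact sqrt2C.symm
  rw [hval, one_smul]

def embEquiv : (Fin 3 → Fin 2) ≃ Fin 8 where
  toFun := emb
  invFun n := fun i => ⟨(n : ℕ) / 2 ^ (2 - (i : ℕ)) % 2, Nat.mod_lt _ (by norm_num)⟩
  left_inv := by decide
  right_inv := by decide

lemma ofMat8_mul (M N : Matrix (Fin 8) (Fin 8) ℂ) :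
    ofMat8 M * ofMat8 N = ofMat8 (M * N) := by
  have h : ∀ P : Matrix (Fin 8) (Fin 8) ℂ, ofMat8 P = P.submatrix embEquiv embEquiv := fun _ => rfl
  rw [h, h, h, Matrix.submatrix_mul_equiv]

lemma ofMat8_one : ofMat8 1 = (1 : MIM 2 3) := by
  have h : ofMat8 1 = (1 : Matrix (Fin 8) (Fin 8) ℂ).submatrix embEquiv embEquiv := rfl
  rw [h, Matrix.submatrix_one_equiv]

lemma RI_inv_eq (θ : ℝ) : (RI θ)⁻¹ = RIinv θ := by
  apply Matrix.inv_eq_right_inv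
  rw [RI_eq, RIinv, ofMat8_mul, key8, ofMat8_one]

lemma E000 : emb (Fin.append ![(0:Fin 2),0] (fun _ : Fin 1 => (0:Fin 2))) = (0 : Fin 8) := by decide
lemma E001 : emb (Fin.append ![(0:Fin 2),0] (fun _ : Fin 1 => (1:Fin 2))) = (1 : Fin 8) := by decide
lemma E010 : emb (Fin.append ![(0:Fin 2),1] (fun _ : Fin 1 => (0:Fin 2))) = (2 : Fin 8) := by decide
lemma E011 : emb (Fin.append ![(0:Fin 2),1] (fun _ : Fin 1 => (1:Fin 2))) = (3 : Fin 8) := by decide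
lemma E100 : emb (Fin.append ![(1:Fin 2),0] (fun _ : Fin 1 => (0:Fin 2))) = (4 : Fin 8) := by decide
lemma E101 : emb (Fin.append ![(1:Fin 2),0] (fun _ : Fin 1 => (1:Fin 2))) = (5 : Fin 8) := by decide
lemma E110 : emb (Fin.append ![(1:Fin 2),1] (fun _ : Fin 1 => (0:Fin 2))) = (6 : Fin 8) := by decide
lemma E111 : emb (Fin.append ![(1:Fin 2),1] (fun _ : Fin 1 => (1:Fin 2))) = (7 : Fin 8) := by decide
lemma S0 : (finSumFinEquiv.symm (0 : Fin 8) : Fin 4 ⊕ Fin 4) = Sum.inl (0 : Fin 4) := by decide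
lemma S1 : (finSumFinEquiv.symm (1 : Fin 8) : Fin 4 ⊕ Fin 4) = Sum.inl (1 : Fin 4) := by decide
lemma S2 : (finSumFinEquiv.symm (2 : Fin 8) : Fin 4 ⊕ Fin 4) = Sum.inl (2 : Fin 4) := by decide
lemma S3 : (finSumFinEquiv.symm (3 : Fin 8) : Fin 4 ⊕ Fin 4) = Sum.inl (3 : Fin 4) := by decide
lemma S4 : (finSumFinEquiv.symm (4 : Fin 8) : Fin 4 ⊕ Fin 4) = Sum.inr (0 : Fin 4) := by decide
lemma S5 : (finSumFinEquiv.symm (5 : Fin 8) : Fin 4 ⊕ Fin 4) = Sum.inr (1 : Fin 4) := by decide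
lemma S6 : (finSumFinEquiv.symm (6 : Fin 8) : Fin 4 ⊕ Fin 4) = Sum.inr (2 : Fin 4) := by decide
lemma S7 : (finSumFinEquiv.symm (7 : Fin 8) : Fin 4 ⊕ Fin 4) = Sum.inr (3 : Fin 4) := by decide

lemma fin2cases (i : Fin 2) : i = 0 ∨ i = 1 := by omega

lemma hexp1 : Complex.exp (Real.pi * Complex.I / 4) =
    ((Real.sqrt 2 : ℝ) : ℂ)⁻¹ * (1 + Complex.I) := by
  have h4 : (Real.pi * Complex.I / 4 : ℂ) = ((Real.pi / 4 : ℝ) : ℂ) * Complex.I := by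
    push_cast; ring
  rw [h4, Complex.exp_mul_I, ← Complex.ofReal_cos, ← Complex.ofReal_sin,
    Real.cos_pi_div_four, Real.sin_pi_div_four]
  have hs : ((Real.sqrt 2 : ℝ) : ℂ) ≠ 0 := Complex.ofReal_ne_zero.mpr (by positivity)
  field_simp
  push_cast
  linear_combination (1 + Complex.I) / 2 * sqrt2C

lemma hexp2 : Complex.exp (-(Real.pi * Complex.I) / 4) =
    ((Real.sqrt 2 : ℝ) : ℂ)⁻¹ * (1 - Complex.I) := by
  have h4 : (-(Real.pi * Complex.I) / 4 : ℂ) = ((-(Real.pi / 4) : ℝ) : ℂ) * Complex.I := by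
    push_cast; ring
  rw [h4, Complex.exp_mul_I, ← Complex.ofReal_cos, ← Complex.ofReal_sin,
    Real.cos_neg, Real.sin_neg, Real.cos_pi_div_four, Real.sin_pi_div_four]
  have hs : ((Real.sqrt 2 : ℝ) : ℂ) ≠ 0 := Complex.ofReal_ne_zero.mpr (by positivity)
  field_simp
  push_cast
  linear_combination (1 - Complex.I) / 2 * sqrt2C

lemma pTr_ofMat8 (M : Matrix (Fin 8) (Fin 8) ℂ) (v w : Fin 2 → Fin 2) :
    pTr 2 1 (ofMat8 M) v w =
      M (emb (Fin.append v (fun _ : Fin 1 => (0:Fin 2)))) (emb (Fin.append w (fun _ : Fin 1 => (0:Fin 2)))) +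
      M (emb (Fin.append v (fun _ : Fin 1 => (1:Fin 2)))) (emb (Fin.append w (fun _ : Fin 1 => (1:Fin 2)))) := by
  rw [pTr, ← Equiv.sum_comp (Equiv.funUnique (Fin 1) (Fin 2)).symm]
  rw [Fin.sum_univ_two]
  rfl

end Helpers

theorem stmt15 (θ : ℝ) (a b : Fin 2 → Fin 2) (hab : a 1 = b 1) :
    (pTr 2 1 (RI θ) - Complex.exp (Real.pi * Complex.I / 4) • (1 : MIM 2 2)) a b = 0 ∧
    (pTr 2 1 ((RI θ)⁻¹) -
      Complex.exp (-(Real.pi * Complex.I) / 4) • (1 : MIM 2 2)) a b = 0 := by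
  have hinv := RI_inv_eq θ
  have ha : a = ![a 0, a 1] := by funext i; fin_cases i <;> rfl
  have hb : b = ![b 0, a 1] := by
    funext i; fin_cases i
    · rfl
    · exact hab.symm
  rcases fin2cases (a 0) with h1 | h1 <;> rcases fin2cases (a 1) with h2 | h2 <;>
    rcases fin2cases (b 0) with h3 | h3 <;>
      rw [h1, h2] at ha <;> rw [h3, h2] at hb <;> rw [ha, hb, hinv] <;>
        refine ⟨?_, ?_⟩ <;>
          simp (config := { decide := true })
            [RI_eq, RIinv, pTr_ofMat8, Matrix.sub_apply, Matrix.smul_apply,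
             E000, E001, E010, E011, E100, E101, E110, E111,
             S0, S1, S2, S3, S4, S5, S6, S7,
             M8, N8, Matrix.reindex_apply, Matrix.submatrix_apply,
             Matrix.fromBlocks_apply₁₁, Matrix.fromBlocks_apply₁₂,
             Matrix.fromBlocks_apply₂₁, Matrix.fromBlocks_apply₂₂,
             AI, AI', DI, DI', Matrix.one_apply, hexp1, hexp2] <;>
          ring_nf
end

section
/- For every real θ, the operator R = R_II(θ) on V^{⊗3}, V = ℂ², is invertible and, with α = e^{iπ/4}, satisfies the cubic relation α^{−2}·R² − α^{−1}·R + Id_{V^{⊗3}} − α·R^{−1} = 0. Moreover tr(R_II(θ)²) = 0. -/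
open scoped BigOperators
open Matrix

section Aux

open Complex

/-- `emb` as an equivalence. -/
noncomputable def embE : (Fin 3 → Fin 2) ≃ Fin 8 :=
  Equiv.ofBijective emb (by decide)

/-- The composite identification with the block index. -/
noncomputable def blkE : (Fin 3 → Fin 2) ≃ (Fin 4 ⊕ Fin 4) :=
  embE.trans ((finCongr (by norm_num : (8:ℕ) = 4 + 4)).trans finSumFinEquiv.symm)

/-- View a block matrix as an endomorphism of `(ℂ²)^{⊗3}`. -/
noncomputable def Tb (X : Matrix (Fin 4 ⊕ Fin 4) (Fin 4 ⊕ Fin 4) ℂ) : MIM 2 3 :=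
  X.submatrix blkE blkE

lemma Tb_mul (X Y : Matrix (Fin 4 ⊕ Fin 4) (Fin 4 ⊕ Fin 4) ℂ) :
    Tb X * Tb Y = Tb (X * Y) :=
  Matrix.submatrix_mul_equiv X Y _ blkE _

lemma Tb_one : Tb 1 = 1 :=
  Matrix.submatrix_one_equiv blkE

lemma Tb_smul (c : ℂ) (X : Matrix (Fin 4 ⊕ Fin 4) (Fin 4 ⊕ Fin 4) ℂ) :
    c • Tb X = Tb (c • X) := rfl

lemma Tb_sub (X Y : Matrix (Fin 4 ⊕ Fin 4) (Fin 4 ⊕ Fin 4) ℂ) :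
    Tb X - Tb Y = Tb (X - Y) := rfl

lemma Tb_add (X Y : Matrix (Fin 4 ⊕ Fin 4) (Fin 4 ⊕ Fin 4) ℂ) :
    Tb X + Tb Y = Tb (X + Y) := rfl

lemma Tb_zero : Tb 0 = 0 := rfl

lemma Tb_trace (X : Matrix (Fin 4 ⊕ Fin 4) (Fin 4 ⊕ Fin 4) ℂ) :
    Matrix.trace (Tb X) = Matrix.trace X := by
  classical
  simpa [Matrix.trace, Matrix.diag, Tb] using
    Equiv.sum_comp blkE (fun i => X i i)

lemma ofMat8_reindex (X : Matrix (Fin 4 ⊕ Fin 4) (Fin 4 ⊕ Fin 4) ℂ) :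
    ofMat8 (Matrix.reindex finSumFinEquiv finSumFinEquiv X) = Tb X := rfl

lemma trace_fromBlocks' (A D : Matrix (Fin 4) (Fin 4) ℂ)
    (B : Matrix (Fin 4) (Fin 4) ℂ) (C : Matrix (Fin 4) (Fin 4) ℂ) :
    Matrix.trace (Matrix.fromBlocks A B C D) = Matrix.trace A + Matrix.trace D := by
  classical
  simp [Matrix.trace, Matrix.diag, Fintype.sum_sum_type, Matrix.fromBlocks]

lemma fromBlocks_sub' (A B C D A' B' C' D' : Matrix (Fin 4) (Fin 4) ℂ) :
    Matrix.fromBlocks A B C D - Matrix.fromBlocks A' B' C' D' =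
      Matrix.fromBlocks (A - A') (B - B') (C - C') (D - D') := by
  ext i j
  rcases i with i | i <;> rcases j with j | j <;> rfl

/-- First diagonal block of `R_II` (unscaled). -/
noncomputable def BB1 (E : ℂ) : Matrix (Fin 4) (Fin 4) ℂ :=
  !![1, 0, 1, 0; 0, I, 0, E; -1, 0, 1, 0; 0, E⁻¹, 0, I]

/-- Second diagonal block of `R_II` (unscaled). -/
noncomputable def BB2 (E : ℂ) : Matrix (Fin 4) (Fin 4) ℂ :=
  !![I, 0, E, 0; 0, 1, 0, -E ^ 2; E⁻¹, 0, I, 0; 0, (E ^ 2)⁻¹, 0, 1]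

/-- Inverse of the first scaled block (unscaled form). -/
noncomputable def CC1 (E : ℂ) : Matrix (Fin 4) (Fin 4) ℂ :=
  !![1, 0, -1, 0; 0, -I, 0, E; 1, 0, 1, 0; 0, E⁻¹, 0, -I]

/-- Inverse of the second scaled block (unscaled form). -/
noncomputable def CC2 (E : ℂ) : Matrix (Fin 4) (Fin 4) ℂ :=
  !![-I, 0, E, 0; 0, 1, 0, E ^ 2; E⁻¹, 0, -I, 0; 0, -(E ^ 2)⁻¹, 0, 1]

set_option maxHeartbeats 3000000 in
lemma blk1_inv (E r : ℂ) (hE : E ≠ 0) (hr : r * r = 2) (hr0 : r ≠ 0) :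
    (r⁻¹ • BB1 E) * (r⁻¹ • CC1 E) = 1 := by
  have h2 : r ^ 2 = 2 := by rw [sq]; exact hr
  have h3 : r ^ 3 = 2 * r := by rw [pow_succ, h2]
  have h4 : r ^ 4 = 4 := by rw [show (4:ℕ)=2+2 from rfl, pow_add, h2]; norm_num
  ext i j
  fin_cases i <;> fin_cases j <;>
    simp [Matrix.mul_apply, Fin.sum_univ_four, BB1, CC1] <;>
    (try field_simp) <;> (try ring_nf) <;> (try simp [h2, h3, h4]) <;>
    (try field_simp) <;> (try ring_nf)

set_option maxHeartbeats 3000000 in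
lemma blk2_inv (E r : ℂ) (hE : E ≠ 0) (hr : r * r = 2) (hr0 : r ≠ 0) :
    (r⁻¹ • BB2 E) * (r⁻¹ • CC2 E) = 1 := by
  have h2 : r ^ 2 = 2 := by rw [sq]; exact hr
  have h3 : r ^ 3 = 2 * r := by rw [pow_succ, h2]
  have h4 : r ^ 4 = 4 := by rw [show (4:ℕ)=2+2 from rfl, pow_add, h2]; norm_num
  ext i j
  fin_cases i <;> fin_cases j <;>
    simp [Matrix.mul_apply, Fin.sum_univ_four, BB2, CC2] <;>
    (try field_simp) <;> (try ring_nf) <;> (try simp [h2, h3, h4]) <;>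
    (try field_simp) <;> (try ring_nf)

set_option maxHeartbeats 3000000 in
lemma blk1_cubic (E r a : ℂ) (hE : E ≠ 0) (hr : r * r = 2) (hr0 : r ≠ 0)
    (ha : a = r⁻¹ * (1 + I)) :
    a⁻¹ ^ 2 • ((r⁻¹ • BB1 E) * (r⁻¹ • BB1 E)) - a⁻¹ • (r⁻¹ • BB1 E) + 1 -
      a • (r⁻¹ • CC1 E) = 0 := by
  have h2 : r ^ 2 = 2 := by rw [sq]; exact hr
  have h3 : r ^ 3 = 2 * r := by rw [pow_succ, h2]
  have h4 : r ^ 4 = 4 := by rw [show (4:ℕ)=2+2 from rfl, pow_add, h2]; norm_num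
  have h5 : r ^ 5 = 4 * r := by rw [pow_succ, h4]
  have h6 : r ^ 6 = 8 := by rw [pow_succ, h5, mul_assoc, hr]; norm_num
  have h7 : r ^ 7 = 8 * r := by rw [pow_succ, h6]
  have hI3 : I ^ 3 = -I := by rw [pow_succ, Complex.I_sq]; ring
  have h1I : (1 + I) ≠ 0 := by
    intro h; apply_fun Complex.im at h; simp at h
  have hai : a⁻¹ = r * (1 - I) / 2 := by
    rw [ha, mul_inv, inv_inv]
    field_simp
    linear_combination Complex.I_sq
  rw [hai, ha]
  ext i j
  fin_cases i <;> fin_cases j <;>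
    simp [Matrix.mul_apply, Fin.sum_univ_four, BB1, CC1] <;>
    (try field_simp) <;> (try ring_nf) <;>
    (try simp [h2, h3, h4, h5, h6, h7, hI3]) <;>
    (try field_simp) <;> (try ring_nf)

set_option maxHeartbeats 3000000 in
lemma blk2_cubic (E r a : ℂ) (hE : E ≠ 0) (hr : r * r = 2) (hr0 : r ≠ 0)
    (ha : a = r⁻¹ * (1 + I)) :
    a⁻¹ ^ 2 • ((r⁻¹ • BB2 E) * (r⁻¹ • BB2 E)) - a⁻¹ • (r⁻¹ • BB2 E) + 1 -
      a • (r⁻¹ • CC2 E) = 0 := by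
  have h2 : r ^ 2 = 2 := by rw [sq]; exact hr
  have h3 : r ^ 3 = 2 * r := by rw [pow_succ, h2]
  have h4 : r ^ 4 = 4 := by rw [show (4:ℕ)=2+2 from rfl, pow_add, h2]; norm_num
  have h5 : r ^ 5 = 4 * r := by rw [pow_succ, h4]
  have h6 : r ^ 6 = 8 := by rw [pow_succ, h5, mul_assoc, hr]; norm_num
  have h7 : r ^ 7 = 8 * r := by rw [pow_succ, h6]
  have hI3 : I ^ 3 = -I := by rw [pow_succ, Complex.I_sq]; ring
  have h1I : (1 + I) ≠ 0 := by
    intro h; apply_fun Complex.im at h; simp at h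
  have hai : a⁻¹ = r * (1 - I) / 2 := by
    rw [ha, mul_inv, inv_inv]
    field_simp
    linear_combination Complex.I_sq
  rw [hai, ha]
  ext i j
  fin_cases i <;> fin_cases j <;>
    simp [Matrix.mul_apply, Fin.sum_univ_four, BB2, CC2] <;>
    (try field_simp) <;> (try ring_nf) <;>
    (try simp [h2, h3, h4, h5, h6, h7, hI3]) <;>
    (try field_simp) <;> (try ring_nf)

set_option maxHeartbeats 3000000 in
lemma blk1_trace (E r : ℂ) (hE : E ≠ 0) (hr0 : r ≠ 0) :
    Matrix.trace ((r⁻¹ • BB1 E) * (r⁻¹ • BB1 E)) = 0 := by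
  simp [Matrix.trace, Matrix.diag, Matrix.mul_apply, Fin.sum_univ_four, BB1]
  field_simp
  linear_combination 2 * Complex.I_sq

set_option maxHeartbeats 3000000 in
lemma blk2_trace (E r : ℂ) (hE : E ≠ 0) (hr0 : r ≠ 0) :
    Matrix.trace ((r⁻¹ • BB2 E) * (r⁻¹ • BB2 E)) = 0 := by
  simp [Matrix.trace, Matrix.diag, Matrix.mul_apply, Fin.sum_univ_four, BB2]
  field_simp
  linear_combination 2 * Complex.I_sq

lemma RII_eq_Tb (θ : ℝ) :
    RII θ = Tb (Matrix.fromBlocks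
      (((Real.sqrt 2 : ℂ))⁻¹ • BB1 (Complex.exp (θ * Complex.I))) 0 0
      (((Real.sqrt 2 : ℂ))⁻¹ • BB2 (Complex.exp (θ * Complex.I)))) := by
  have e1 : Complex.exp (-θ * Complex.I) = (Complex.exp (θ * Complex.I))⁻¹ := by
    rw [← Complex.exp_neg]; ring_nf
  have e2 : Complex.exp (2 * θ * Complex.I) = (Complex.exp (θ * Complex.I)) ^ 2 := by
    rw [← Complex.exp_nat_mul]; ring_nf
  have e3 : Complex.exp (-2 * θ * Complex.I) = ((Complex.exp (θ * Complex.I)) ^ 2)⁻¹ := by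
    rw [← e2, ← Complex.exp_neg]; ring_nf
  unfold RII
  rw [e1, e2, e3]
  rw [show (Matrix.fromBlocks
      (((Real.sqrt 2 : ℂ))⁻¹ • BB1 (Complex.exp (θ * Complex.I))) 0 0
      (((Real.sqrt 2 : ℂ))⁻¹ • BB2 (Complex.exp (θ * Complex.I)))) =
    ((Real.sqrt 2 : ℂ))⁻¹ • (Matrix.fromBlocks (BB1 (Complex.exp (θ * Complex.I))) 0 0
      (BB2 (Complex.exp (θ * Complex.I)))) from by
      rw [Matrix.fromBlocks_smul]; simp]
  rw [← ofMat8_reindex]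
  rfl

end Aux

set_option maxRecDepth 40000 in
theorem stmt17 (θ : ℝ) (α : ℂ) (hα : α = Complex.exp (Real.pi * Complex.I / 4)) :
    IsUnit (RII θ) ∧
    α⁻¹ ^ 2 • (RII θ * RII θ) - α⁻¹ • RII θ + (1 : MIM 2 3) - α • (RII θ)⁻¹ = 0 ∧
    Matrix.trace (RII θ * RII θ) = 0 := by
  have hE : Complex.exp (θ * Complex.I) ≠ 0 := Complex.exp_ne_zero _
  set E : ℂ := Complex.exp (θ * Complex.I) with hEdef
  set r : ℂ := ((Real.sqrt 2 : ℝ) : ℂ) with hrdef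
  have hrr : Real.sqrt 2 * Real.sqrt 2 = 2 := Real.mul_self_sqrt (by norm_num)
  have hr : r * r = 2 := by rw [hrdef, ← Complex.ofReal_mul, hrr]; norm_num
  have hr0 : r ≠ 0 := by
    rw [hrdef]
    exact_mod_cast Complex.ofReal_ne_zero.mpr
      (ne_of_gt (Real.sqrt_pos.mpr (by norm_num)))
  have haval : α = r⁻¹ * (1 + Complex.I) := by
    rw [hα, show (Real.pi : ℂ) * Complex.I / 4 = ((Real.pi / 4 : ℝ) : ℂ) * Complex.I by
      push_cast; ring, Complex.exp_mul_I, ← Complex.ofReal_cos, ← Complex.ofReal_sin,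
      Real.cos_pi_div_four, Real.sin_pi_div_four]
    rw [hrdef]
    have : ((Real.sqrt 2 : ℝ) : ℂ) ≠ 0 := by rwa [hrdef] at hr0
    field_simp
    push_cast
    linear_combination (Complex.I + 1) / 2 * (by rw [← Complex.ofReal_mul, hrr]; norm_num :
      ((Real.sqrt 2 : ℝ) : ℂ) * ((Real.sqrt 2 : ℝ) : ℂ) = 2)
  have ha0 : α ≠ 0 := by rw [hα]; exact Complex.exp_ne_zero _
  have hR : RII θ = Tb (Matrix.fromBlocks (r⁻¹ • BB1 E) 0 0 (r⁻¹ • BB2 E)) := RII_eq_Tb θ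
  have hRinvmul : RII θ * Tb (Matrix.fromBlocks (r⁻¹ • CC1 E) 0 0 (r⁻¹ • CC2 E)) = 1 := by
    rw [hR, Tb_mul, Matrix.fromBlocks_multiply]
    simp only [Matrix.mul_zero, Matrix.zero_mul, add_zero, zero_add]
    rw [blk1_inv E r hE hr hr0, blk2_inv E r hE hr hr0, Matrix.fromBlocks_one, Tb_one]
  have hunit : IsUnit (RII θ) :=
    ⟨⟨RII θ, Tb (Matrix.fromBlocks (r⁻¹ • CC1 E) 0 0 (r⁻¹ • CC2 E)), hRinvmul,
      mul_eq_one_comm.mp hRinvmul⟩, rfl⟩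
  have hinv : (RII θ)⁻¹ = Tb (Matrix.fromBlocks (r⁻¹ • CC1 E) 0 0 (r⁻¹ • CC2 E)) :=
    Matrix.inv_eq_right_inv hRinvmul
  refine ⟨hunit, ?_, ?_⟩
  · rw [hinv, hR, Tb_mul, Tb_smul, Tb_smul, Tb_smul, ← Tb_one, Tb_sub, Tb_add, Tb_sub,
      ← Tb_zero]
    congr 1
    rw [Matrix.fromBlocks_multiply]
    simp only [Matrix.mul_zero, Matrix.zero_mul, add_zero, zero_add]
    rw [Matrix.fromBlocks_smul, Matrix.fromBlocks_smul, Matrix.fromBlocks_smul,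
      ← Matrix.fromBlocks_one, fromBlocks_sub', Matrix.fromBlocks_add, fromBlocks_sub']
    simp only [smul_zero, sub_zero, add_zero, zero_add, zero_sub, neg_zero, zero_add]
    rw [blk1_cubic E r α hE hr hr0 haval, blk2_cubic E r α hE hr hr0 haval]
    simp [Matrix.fromBlocks_zero]
  · rw [hR, Tb_mul, Tb_trace, Matrix.fromBlocks_multiply]
    simp only [Matrix.mul_zero, Matrix.zero_mul, add_zero, zero_add]
    rw [trace_fromBlocks', blk1_trace E r hE hr0, blk2_trace E r hE hr0, add_zero]
end
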